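/- arXiv:0904.0182 — 2 statements merged into one kernel-verified Lean document; each statement's English description precedes it below -/
import Mathlib

section
/- Any three-manifold with a Heegaard splitting of genus zero is homeomorphic to the three-sphere (via the Alexander trick): let M be a compact Hausdorff topological space, and let B₁ and B₂ be closed subsets of M with M = B₁ ∪ B₂. Suppose there are homeomorphisms φ₁ and φ₂ from the closed unit ball of EuclideanSpace ℝ (Fin 3) onto B₁ and onto B₂ (each with the subspace topology) such that B₁ ∩ B₂ = φ₁(unit sphere) = φ₂(unit sphere). Then M is homeomorphic to the unit sphere in EuclideanSpace ℝ (Fin 4). -/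
/-!
The gluing map `φ₂⁻¹ ∘ φ₁` on the boundary sphere is a self-homeomorphism `g` of `S²`, and by
Alexander's trick it extends radially to a self-homeomorphism `h` of the closed ball. After
replacing `φ₂` by `φ₂ ∘ h`, the two balls are glued by the identity of `S²`, exactly as the two
hemispheres of `S³` are glued along the equator. So `M` and `S³` are images of the same disjoint
union of two balls with the same fibres, and a continuous bijection from a compact space to a
Hausdorff space is a homeomorphism.
-/

open Function Set Metric Topology

theorem nonempty_homeomorph_of_fibers_eq {Y X M : Type*} [TopologicalSpace Y] [CompactSpace Y]
    [TopologicalSpace X] [T2Space X] [TopologicalSpace M] [T2Space M] {p : Y → X} {q : Y → M}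
    (hp : Continuous p) (hp_surj : Surjective p) (hq : Continuous q) (hq_surj : Surjective q)
    (h : ∀ y y', p y = p y' ↔ q y = q y') : Nonempty (X ≃ₜ M) := by
  have : CompactSpace X := hp_surj.compactSpace hp
  let f : X → M := q ∘ surjInv hp_surj
  have hfp : ∀ y, f (p y) = q y := fun y => (h _ _).1 (surjInv_eq hp_surj (p y))
  have hf : Continuous f :=
    (IsQuotientMap.of_surjective_continuous hp_surj hp).continuous_iff.2 <|
      (funext hfp : f ∘ p = q) ▸ hq
  have hf_bij : Bijective f := by
    refine ⟨hp_surj.forall₂.2 fun y y' hyy' => (h y y').2 ?_, fun m => ?_⟩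
    · rwa [hfp, hfp] at hyy'
    · obtain ⟨y, rfl⟩ := hq_surj m
      exact ⟨p y, hfp y⟩
  exact ⟨hf.homeoOfEquivCompactToT2 (f := .ofBijective f hf_bij)⟩

theorem nonempty_homeomorph_of_gluing {D X M : Type*} [TopologicalSpace D] [CompactSpace D]
    [TopologicalSpace X] [T2Space X] [TopologicalSpace M] [T2Space M]
    {ψ₁ ψ₂ : D → X} {φ₁ φ₂ : D → M}
    (hψ₁ : Continuous ψ₁) (hψ₂ : Continuous ψ₂) (hψ₁_inj : Injective ψ₁) (hψ₂_inj : Injective ψ₂)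
    (hψ : range ψ₁ ∪ range ψ₂ = univ)
    (hφ₁ : Continuous φ₁) (hφ₂ : Continuous φ₂) (hφ₁_inj : Injective φ₁) (hφ₂_inj : Injective φ₂)
    (hφ : range φ₁ ∪ range φ₂ = univ)
    (h : ∀ a b, ψ₁ a = ψ₂ b ↔ φ₁ a = φ₂ b) : Nonempty (X ≃ₜ M) := by
  refine nonempty_homeomorph_of_fibers_eq (p := Sum.elim ψ₁ ψ₂) (q := Sum.elim φ₁ φ₂)
    (hψ₁.sumElim hψ₂) (by rw [← range_eq_univ, Set.Sum.elim_range, hψ]) (hφ₁.sumElim hφ₂)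
    (by rw [← range_eq_univ, Set.Sum.elim_range, hφ]) ?_
  rintro (a | a) (b | b)
  · simp only [Sum.elim_inl, hψ₁_inj.eq_iff, hφ₁_inj.eq_iff]
  · exact h a b
  · simp only [Sum.elim_inl, Sum.elim_inr]; rw [eq_comm, h, eq_comm]
  · simp only [Sum.elim_inr, hψ₂_inj.eq_iff, hφ₂_inj.eq_iff]

theorem exists_homeomorph_comp_eq_of_range_eq {Z M : Type*} [TopologicalSpace Z]
    [TopologicalSpace M] {f₁ f₂ : Z → M} (hf₁ : IsEmbedding f₁) (hf₂ : IsEmbedding f₂)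
    (h : range f₁ = range f₂) : ∃ g : Z ≃ₜ Z, ∀ z, f₂ (g z) = f₁ z := by
  refine ⟨hf₁.toHomeomorph.trans ((Homeomorph.setCongr h).trans hf₂.toHomeomorph.symm),
    fun z => ?_⟩
  have := congrArg Subtype.val
    (hf₂.toHomeomorph.apply_symm_apply (Homeomorph.setCongr h (hf₁.toHomeomorph z)))
  rw [IsEmbedding.toHomeomorph_apply_coe] at this
  exact this.trans (hf₁.toHomeomorph_apply_coe z)

theorem apply_eq_comp_apply_iff_of_inter_range {D M : Type*} {φ₁ φ₂ : D → M} (hφ₁ : Injective φ₁)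
    (hφ₂ : Injective φ₂) {S : Set D} (hS₁ : range φ₁ ∩ range φ₂ = φ₁ '' S)
    (hS₂ : range φ₁ ∩ range φ₂ = φ₂ '' S) {e : D → D} (he : e ⁻¹' S ⊆ S)
    (heq : ∀ b ∈ S, φ₂ (e b) = φ₁ b) (a b : D) : φ₁ a = φ₂ (e b) ↔ a = b ∧ a ∈ S := by
  constructor
  · intro hab
    have hm : φ₁ a ∈ range φ₁ ∩ range φ₂ := ⟨mem_range_self a, hab ▸ mem_range_self _⟩
    have ha : a ∈ S := hφ₁.mem_set_image.1 (hS₁ ▸ hm)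
    have heb : φ₂ (e b) ∈ φ₂ '' S := hS₂ ▸ hab ▸ hm
    have hb : b ∈ S := he (hφ₂.mem_set_image.1 heb : e b ∈ S)
    exact ⟨hφ₁ (hab.trans (heq b hb)), ha⟩
  · rintro ⟨rfl, ha⟩
    exact (heq a ha).symm

section RadialExtension

variable {E : Type*} [NormedAddCommGroup E] [NormedSpace ℝ E]

theorem inv_norm_smul_mem_unitSphere {y : E} (hy : y ≠ 0) : ‖y‖⁻¹ • y ∈ sphere (0 : E) 1 := by
  rw [mem_sphere_zero_iff_norm, norm_smul, norm_inv, norm_norm,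
    inv_mul_cancel₀ (norm_ne_zero_iff.2 hy)]

open Classical in
noncomputable def radialExtension (g : sphere (0 : E) 1 → sphere (0 : E) 1) (y : E) : E :=
  if hy : y = 0 then 0 else ‖y‖ • (g ⟨‖y‖⁻¹ • y, inv_norm_smul_mem_unitSphere hy⟩ : E)

variable {g g' : sphere (0 : E) 1 → sphere (0 : E) 1}

@[simp]
theorem radialExtension_zero : radialExtension g 0 = 0 := dif_pos rfl

theorem radialExtension_smul {r : ℝ} (hr : 0 ≤ r) (x : sphere (0 : E) 1) :
    radialExtension g (r • (x : E)) = r • (g x : E) := by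
  rcases hr.eq_or_lt with rfl | hr
  · simp
  have hx : ‖(x : E)‖ = 1 := mem_sphere_zero_iff_norm.1 x.2
  have hrx : r • (x : E) ≠ 0 := smul_ne_zero hr.ne' (ne_zero_of_mem_unit_sphere x)
  have hnorm : ‖r • (x : E)‖ = r := by rw [norm_smul, hx, mul_one, Real.norm_of_nonneg hr.le]
  rw [radialExtension, dif_neg hrx]
  congr 3
  ext
  simp [hnorm, smul_smul, hr.ne']

theorem norm_radialExtension (y : E) : ‖radialExtension g y‖ = ‖y‖ := by
  rw [radialExtension]
  split_ifs with hy
  · simp [hy]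
  · rw [norm_smul, norm_norm, mem_sphere_zero_iff_norm.1 (g _).2, mul_one]

theorem exists_eq_nonneg_smul_unitSphere {y : E} (hy : y ≠ 0) :
    ∃ r : ℝ, 0 ≤ r ∧ ∃ x : sphere (0 : E) 1, y = r • (x : E) :=
  ⟨‖y‖, norm_nonneg y, ⟨_, inv_norm_smul_mem_unitSphere hy⟩, by
    simp [smul_smul, norm_ne_zero_iff.2 hy]⟩

theorem radialExtension_comp (y : E) :
    radialExtension g (radialExtension g' y) = radialExtension (g ∘ g') y := by
  rcases eq_or_ne y 0 with rfl | hy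
  · simp
  obtain ⟨r, hr, x, rfl⟩ := exists_eq_nonneg_smul_unitSphere hy
  rw [radialExtension_smul hr, radialExtension_smul hr, radialExtension_smul hr, comp_apply]

theorem radialExtension_id : radialExtension (id : sphere (0 : E) 1 → _) = id := by
  funext y
  rcases eq_or_ne y 0 with rfl | hy
  · simp
  obtain ⟨r, hr, x, rfl⟩ := exists_eq_nonneg_smul_unitSphere hy
  rw [radialExtension_smul hr, id, id]

theorem continuous_radialExtension (hg : Continuous g) : Continuous (radialExtension g) := by
  refine continuous_iff_continuousAt.2 fun y => ?_
  rcases eq_or_ne y 0 with rfl | hy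
  · rw [ContinuousAt, radialExtension_zero, tendsto_zero_iff_norm_tendsto_zero]
    simpa only [norm_radialExtension] using continuous_norm.tendsto' 0 0 norm_zero
  refine (continuousOn_iff_continuous_domRestrict.2 ?_).continuousAt
    (isOpen_compl_singleton.mem_nhds hy)
  have : ({0}ᶜ : Set E).domRestrict (radialExtension g) = fun y : ({0}ᶜ : Set E) =>
      ‖(y : E)‖ • (g ⟨‖(y : E)‖⁻¹ • (y : E), inv_norm_smul_mem_unitSphere y.2⟩ : E) :=
    funext fun y => dif_neg y.2
  rw [this]
  fun_prop (disch := exact fun y => norm_ne_zero_iff.2 y.2)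

noncomputable def Homeomorph.radialExtension (g : sphere (0 : E) 1 ≃ₜ sphere (0 : E) 1) :
    E ≃ₜ E where
  toFun := _root_.radialExtension g
  invFun := _root_.radialExtension g.symm
  left_inv y := by simp [radialExtension_comp, radialExtension_id]
  right_inv y := by simp [radialExtension_comp, radialExtension_id]
  continuous_toFun := continuous_radialExtension g.continuous
  continuous_invFun := continuous_radialExtension g.symm.continuous

/-- Alexander's trick. -/
theorem exists_homeomorph_closedBall_extending (g : sphere (0 : E) 1 ≃ₜ sphere (0 : E) 1) :
    ∃ h : closedBall (0 : E) 1 ≃ₜ closedBall (0 : E) 1, (∀ y, ‖(h y : E)‖ = ‖(y : E)‖) ∧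
      ∀ x, h (inclusion sphere_subset_closedBall x) = inclusion sphere_subset_closedBall (g x) := by
  refine ⟨(Homeomorph.radialExtension g).subtype fun y => ?_, fun y => ?_, fun x => ?_⟩
  · simp [Homeomorph.radialExtension, norm_radialExtension]
  · simp [Homeomorph.radialExtension, norm_radialExtension]
  · ext
    simpa [Homeomorph.radialExtension] using radialExtension_smul zero_le_one x (g := g)

end RadialExtension

section Hemisphere

variable {n : ℕ}

def euclideanSnoc (y : EuclideanSpace ℝ (Fin n)) (t : ℝ) : EuclideanSpace ℝ (Fin (n + 1)) :=
  WithLp.toLp 2 (Fin.snoc y.ofLp t)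

theorem norm_euclideanSnoc_sq (y : EuclideanSpace ℝ (Fin n)) (t : ℝ) :
    ‖euclideanSnoc y t‖ ^ 2 = ‖y‖ ^ 2 + t ^ 2 := by
  simp [EuclideanSpace.real_norm_sq_eq, Fin.sum_univ_castSucc, euclideanSnoc]

theorem euclideanSnoc_inj {y y' : EuclideanSpace ℝ (Fin n)} {t t' : ℝ} :
    euclideanSnoc y t = euclideanSnoc y' t' ↔ y = y' ∧ t = t' := by
  rw [euclideanSnoc, euclideanSnoc, (WithLp.toLp_injective 2).eq_iff, Fin.snoc_injective2.eq_iff,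
    (WithLp.ofLp_injective 2).eq_iff]

theorem exists_euclideanSnoc_eq (p : EuclideanSpace ℝ (Fin (n + 1))) :
    ∃ y t, euclideanSnoc y t = p :=
  ⟨WithLp.toLp 2 (Fin.init p.ofLp), p.ofLp (Fin.last n), by simp [euclideanSnoc]⟩

noncomputable def hemisphere (ε : ℝ) (hε : ε ^ 2 = 1)
    (y : closedBall (0 : EuclideanSpace ℝ (Fin n)) 1) :
    sphere (0 : EuclideanSpace ℝ (Fin (n + 1))) 1 :=
  ⟨euclideanSnoc y (ε * √(1 - ‖(y : EuclideanSpace ℝ (Fin n))‖ ^ 2)), by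
    have hy := mem_closedBall_zero_iff.1 y.2
    have hy₀ := norm_nonneg (y : EuclideanSpace ℝ (Fin n))
    rw [mem_sphere_zero_iff_norm, ← pow_eq_one_iff_of_nonneg (norm_nonneg _) two_ne_zero,
      norm_euclideanSnoc_sq, mul_pow, hε, one_mul, Real.sq_sqrt (by nlinarith)]
    ring⟩

variable {ε : ℝ} {hε : ε ^ 2 = 1}

theorem continuous_hemisphere : Continuous (hemisphere (n := n) ε hε) := by
  unfold hemisphere euclideanSnoc
  fun_prop

theorem hemisphere_injective : Injective (hemisphere (n := n) ε hε) := fun a b hab => by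
  have := euclideanSnoc_inj.1 (congrArg Subtype.val hab)
  exact Subtype.ext this.1

theorem hemisphere_one_eq_neg_one_iff {a b : closedBall (0 : EuclideanSpace ℝ (Fin n)) 1} :
    hemisphere 1 (one_pow 2) a = hemisphere (-1) (by norm_num) b ↔
      a = b ∧ ‖(a : EuclideanSpace ℝ (Fin n))‖ = 1 := by
  rw [hemisphere, hemisphere, Subtype.mk.injEq, euclideanSnoc_inj, Subtype.coe_inj]
  constructor
  · rintro ⟨rfl, h⟩
    have h0 : √(1 - ‖(a : EuclideanSpace ℝ (Fin n))‖ ^ 2) = 0 := by linarith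
    rw [Real.sqrt_eq_zero'] at h0
    have ha := mem_closedBall_zero_iff.1 a.2
    exact ⟨rfl, by nlinarith [norm_nonneg (a : EuclideanSpace ℝ (Fin n))]⟩
  · rintro ⟨rfl, ha⟩
    simp [ha]

theorem range_hemisphere_union :
    range (hemisphere (n := n) 1 (one_pow 2)) ∪ range (hemisphere (-1) (by norm_num)) = univ := by
  refine eq_univ_of_forall fun p => ?_
  obtain ⟨y, t, hp⟩ := exists_euclideanSnoc_eq (p : EuclideanSpace ℝ (Fin (n + 1)))
  have hyt : ‖y‖ ^ 2 + t ^ 2 = 1 := by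
    rw [← norm_euclideanSnoc_sq, hp, mem_sphere_zero_iff_norm.1 p.2, one_pow]
  have hy : y ∈ closedBall 0 1 := mem_closedBall_zero_iff.2 (by nlinarith [norm_nonneg y])
  have hsqrt : √(1 - ‖y‖ ^ 2) = |t| := by
    rw [← hyt, add_sub_cancel_left, Real.sqrt_sq_eq_abs]
  rcases le_or_gt 0 t with ht | ht
  · exact Or.inl ⟨⟨y, hy⟩, Subtype.ext (by simp [hemisphere, hsqrt, abs_of_nonneg ht, hp])⟩
  · exact Or.inr ⟨⟨y, hy⟩, Subtype.ext (by simp [hemisphere, hsqrt, abs_of_neg ht, hp])⟩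

end Hemisphere

theorem genus_zero_splitting_gives_three_sphere_general
    (M : Type*) [TopologicalSpace M] [T2Space M]
    (B₁ B₂ : Set M)
    (hM : B₁ ∪ B₂ = Set.univ)
    (φ₁ : ↥(Metric.closedBall (0 : EuclideanSpace ℝ (Fin 3)) 1) → M)
    (hφ₁ : Topology.IsEmbedding φ₁) (hφ₁r : Set.range φ₁ = B₁)
    (hφ₁s : φ₁ '' {x | ‖(x : EuclideanSpace ℝ (Fin 3))‖ = 1} = B₁ ∩ B₂)
    (φ₂ : ↥(Metric.closedBall (0 : EuclideanSpace ℝ (Fin 3)) 1) → M)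
    (hφ₂ : Topology.IsEmbedding φ₂) (hφ₂r : Set.range φ₂ = B₂)
    (hφ₂s : φ₂ '' {x | ‖(x : EuclideanSpace ℝ (Fin 3))‖ = 1} = B₁ ∩ B₂) :
    Nonempty (M ≃ₜ ↥(Metric.sphere (0 : EuclideanSpace ℝ (Fin 4)) 1)) := by
  have hι := IsEmbedding.inclusion
    (sphere_subset_closedBall (x := (0 : EuclideanSpace ℝ (Fin 3))) (ε := 1))
  obtain ⟨g, hg⟩ := exists_homeomorph_comp_eq_of_range_eq (hφ₁.comp hι) (hφ₂.comp hι)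
    (by simp [range_comp, range_inclusion, hφ₁s, hφ₂s])
  obtain ⟨h, h_norm, h_sphere⟩ := exists_homeomorph_closedBall_extending g
  have hS : range φ₁ ∩ range φ₂ = φ₁ '' {x | ‖(x : EuclideanSpace ℝ (Fin 3))‖ = 1} := by
    rw [hφ₁r, hφ₂r, hφ₁s]
  have h_glue := apply_eq_comp_apply_iff_of_inter_range hφ₁.injective hφ₂.injective hS
    (hS.trans (hφ₁s.trans hφ₂s.symm)) (e := h) (fun b hb => by simpa [h_norm] using hb)
    fun b hb => by
      have := hg ⟨b, mem_sphere_zero_iff_norm.2 hb⟩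
      rwa [comp_apply, comp_apply, ← h_sphere] at this
  refine (nonempty_homeomorph_of_gluing continuous_hemisphere continuous_hemisphere
    hemisphere_injective hemisphere_injective range_hemisphere_union hφ₁.continuous
    (hφ₂.continuous.comp h.continuous) hφ₁.injective (hφ₂.injective.comp h.injective) ?_
    fun a b => hemisphere_one_eq_neg_one_iff.trans (h_glue a b).symm).map Homeomorph.symm
  rw [range_comp, h.range_coe, image_univ, hφ₁r, hφ₂r, hM]

/-- Any three-manifold with a Heegaard splitting of genus zero is homeomorphic
to the three-sphere: if a compact Hausdorff space `M` is the union of two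
closed subsets `B₁` and `B₂`, each homeomorphic to the closed unit three-ball
via homeomorphisms carrying the unit two-sphere onto `B₁ ∩ B₂`, then `M` is
homeomorphic to the unit sphere in `EuclideanSpace ℝ (Fin 4)`. -/
theorem genus_zero_splitting_gives_three_sphere
    (M : Type*) [TopologicalSpace M] [CompactSpace M] [T2Space M]
    (B₁ B₂ : Set M) (hB₁ : IsClosed B₁) (hB₂ : IsClosed B₂)
    (hM : B₁ ∪ B₂ = Set.univ)
    (φ₁ : ↥(Metric.closedBall (0 : EuclideanSpace ℝ (Fin 3)) 1) → M)
    (hφ₁ : Topology.IsEmbedding φ₁) (hφ₁r : Set.range φ₁ = B₁)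
    (hφ₁s : φ₁ '' {x | ‖(x : EuclideanSpace ℝ (Fin 3))‖ = 1} = B₁ ∩ B₂)
    (φ₂ : ↥(Metric.closedBall (0 : EuclideanSpace ℝ (Fin 3)) 1) → M)
    (hφ₂ : Topology.IsEmbedding φ₂) (hφ₂r : Set.range φ₂ = B₂)
    (hφ₂s : φ₂ '' {x | ‖(x : EuclideanSpace ℝ (Fin 3))‖ = 1} = B₁ ∩ B₂) :
    Nonempty (M ≃ₜ ↥(Metric.sphere (0 : EuclideanSpace ℝ (Fin 4)) 1)) :=
  genus_zero_splitting_gives_three_sphere_general M B₁ B₂ hM φ₁ hφ₁ hφ₁r hφ₁s φ₂ hφ₂ hφ₂r hφ₂s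
end

section
/- Alexander trick (cone extension): every homeomorphism of the two-sphere extends to a homeomorphism of the three-ball. Precisely, if f is a homeomorphism of the unit sphere of EuclideanSpace ℝ (Fin 3) onto itself, then there exists a homeomorphism F of the closed unit ball of EuclideanSpace ℝ (Fin 3) onto itself whose restriction to the unit sphere equals f. -/
/-!
Cone the homeomorphism `f` of the unit sphere radially: `F (r • u) = r • f u` for `‖u‖ = 1` and
`r ≥ 0`, with `F 0 = 0`. This `F` preserves norms, is continuous away from the origin because
`x ↦ ‖x‖⁻¹ • x` is, and at the origin because `‖F x‖ = ‖x‖`; coning `f.symm` inverts it. Being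
norm-preserving, `F` restricts to a homeomorphism of the closed ball extending `f`.
-/

open Metric Function

variable {E : Type*} [NormedAddCommGroup E] [NormedSpace ℝ E]

noncomputable section

def normalizeToSphere (x : E) (hx : x ≠ 0) : sphere (0 : E) 1 :=
  ⟨‖x‖⁻¹ • x, by simp [norm_smul, hx]⟩

@[simp]
lemma coe_normalizeToSphere (x : E) (hx : x ≠ 0) : (normalizeToSphere x hx : E) = ‖x‖⁻¹ • x :=
  rfl

lemma continuous_normalizeToSphere :
    Continuous fun y : ({0}ᶜ : Set E) ↦ normalizeToSphere (y : E) y.2 :=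
  ((continuous_norm.comp continuous_subtype_val).inv₀ (fun y ↦ norm_ne_zero_iff.2 y.2)).smul
    continuous_subtype_val |>.subtype_mk _

open scoped Classical in
def coneExtend (f : sphere (0 : E) 1 → sphere (0 : E) 1) (x : E) : E :=
  if hx : x = 0 then 0 else ‖x‖ • (f (normalizeToSphere x hx) : E)

section

variable (f g : sphere (0 : E) 1 → sphere (0 : E) 1)

@[simp]
lemma coneExtend_zero : coneExtend f 0 = 0 := dif_pos rfl

lemma coneExtend_of_ne_zero {x : E} (hx : x ≠ 0) :
    coneExtend f x = ‖x‖ • (f (normalizeToSphere x hx) : E) := dif_neg hx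

@[simp]
lemma norm_coneExtend (x : E) : ‖coneExtend f x‖ = ‖x‖ := by
  rcases eq_or_ne x 0 with rfl | hx
  · simp
  · rw [coneExtend_of_ne_zero f hx, norm_smul, norm_norm, mem_sphere_zero_iff_norm.1 (f _).2,
      mul_one]

lemma coneExtend_of_mem_sphere {x : E} (hx : x ∈ sphere (0 : E) 1) :
    coneExtend f x = f ⟨x, hx⟩ := by
  have hnorm : ‖x‖ = 1 := mem_sphere_zero_iff_norm.1 hx
  have hx0 : x ≠ 0 := ne_zero_of_norm_ne_zero (hnorm.trans_ne one_ne_zero)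
  have hu : normalizeToSphere x hx0 = ⟨x, hx⟩ := Subtype.ext (by simp [hnorm])
  rw [coneExtend_of_ne_zero f hx0, hu, hnorm, one_smul]

lemma normalizeToSphere_coneExtend {x : E} (hx : x ≠ 0) (hfx : coneExtend f x ≠ 0) :
    normalizeToSphere (coneExtend f x) hfx = f (normalizeToSphere x hx) :=
  Subtype.ext <| by
    rw [coe_normalizeToSphere, norm_coneExtend, coneExtend_of_ne_zero f hx, smul_smul,
      inv_mul_cancel₀ (norm_ne_zero_iff.2 hx), one_smul]

lemma coneExtend_coneExtend (x : E) : coneExtend g (coneExtend f x) = coneExtend (g ∘ f) x := by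
  rcases eq_or_ne x 0 with rfl | hx
  · simp
  have hfx : coneExtend f x ≠ 0 := norm_ne_zero_iff.1 (by simpa using hx)
  rw [coneExtend_of_ne_zero _ hfx, normalizeToSphere_coneExtend f hx, norm_coneExtend,
    coneExtend_of_ne_zero (g ∘ f) hx, comp_apply]

lemma coneExtend_id : coneExtend (id : sphere (0 : E) 1 → _) = id := by
  ext1 x
  rcases eq_or_ne x 0 with rfl | hx
  · simp
  · rw [coneExtend_of_ne_zero _ hx, id, coe_normalizeToSphere, smul_smul,
      mul_inv_cancel₀ (norm_ne_zero_iff.2 hx), one_smul, id]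

lemma continuous_coneExtend (hf : Continuous f) : Continuous (coneExtend f) := by
  refine continuous_iff_continuousAt.2 fun x ↦ ?_
  rcases eq_or_ne x 0 with rfl | hx
  · rw [ContinuousAt, coneExtend_zero, tendsto_zero_iff_norm_tendsto_zero]
    simpa only [norm_coneExtend] using continuous_norm.tendsto' 0 0 norm_zero
  have hon : ContinuousOn (coneExtend f) {0}ᶜ := by
    refine continuousOn_iff_continuous_domRestrict.2 <|
      (continuous_congr fun y : ({0}ᶜ : Set E) ↦ (coneExtend_of_ne_zero f y.2).symm).1 ?_
    exact (continuous_norm.comp continuous_subtype_val).smul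
      (continuous_subtype_val.comp (hf.comp continuous_normalizeToSphere))
  exact hon.continuousAt (isOpen_compl_singleton.mem_nhds hx)

end

@[simps]
def Homeomorph.coneExtend (f : sphere (0 : E) 1 ≃ₜ sphere (0 : E) 1) : E ≃ₜ E where
  toFun := _root_.coneExtend f
  invFun := _root_.coneExtend f.symm
  left_inv x := by rw [coneExtend_coneExtend, f.symm_comp_self, coneExtend_id, id]
  right_inv x := by rw [coneExtend_coneExtend, f.self_comp_symm, coneExtend_id, id]
  continuous_toFun := continuous_coneExtend f f.continuous
  continuous_invFun := continuous_coneExtend f.symm f.symm.continuous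

def Homeomorph.coneExtendClosedBall (f : sphere (0 : E) 1 ≃ₜ sphere (0 : E) 1) (r : ℝ) :
    closedBall (0 : E) r ≃ₜ closedBall (0 : E) r :=
  (Homeomorph.coneExtend f).subtype fun x ↦ by
    rw [mem_closedBall_zero_iff, mem_closedBall_zero_iff, Homeomorph.coneExtend_apply,
      norm_coneExtend]

end

/-- Alexander trick (cone extension): every homeomorphism of the unit
two-sphere extends to a homeomorphism of the closed unit three-ball. -/
theorem alexander_trick
    (f : ↥(Metric.sphere (0 : EuclideanSpace ℝ (Fin 3)) 1) ≃ₜ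
         ↥(Metric.sphere (0 : EuclideanSpace ℝ (Fin 3)) 1)) :
    ∃ F : ↥(Metric.closedBall (0 : EuclideanSpace ℝ (Fin 3)) 1) ≃ₜ
          ↥(Metric.closedBall (0 : EuclideanSpace ℝ (Fin 3)) 1),
      ∀ (x : ↥(Metric.closedBall (0 : EuclideanSpace ℝ (Fin 3)) 1))
        (hx : (x : EuclideanSpace ℝ (Fin 3)) ∈
          Metric.sphere (0 : EuclideanSpace ℝ (Fin 3)) 1),
        (F x : EuclideanSpace ℝ (Fin 3)) = (f ⟨x, hx⟩ : EuclideanSpace ℝ (Fin 3)) :=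
  ⟨Homeomorph.coneExtendClosedBall f 1, fun _ hx ↦ coneExtend_of_mem_sphere f hx⟩
end
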